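/- arXiv:2411.06047 — 3 statements merged into one kernel-verified Lean document; each statement's English description precedes it below -/
import Mathlib

section
/- No 3×3 persymmetric Jacobi matrix realizing perfect state transfer at earliest time T₀ admits early state exclusion: there is no t with 0 < t < T₀ such that (e^{-itJ}e_0, e_0) = 0. -/
open Complex Matrix

/-- No 3×3 persymmetric Jacobi matrix realizing perfect state transfer at the
earliest time `T₀` admits early state exclusion. -/
theorem stmt3 (a0 a1 b0 : ℝ) (hb0 : 0 < b0)
    (J : Matrix (Fin 3) (Fin 3) ℂ)
    (hJ : J = !![(a0 : ℂ), b0, 0; b0, a1, b0; 0, b0, a0])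
    (T0 : ℝ) (hT0 : 0 < T0)
    (hPST : ∃ φ : ℝ, (NormedSpace.exp ((-(I * T0)) • J)).mulVec (Pi.single 0 1) =
      Complex.exp (I * φ) • (Pi.single 2 1 : Fin 3 → ℂ))
    (hEarliest : ∀ T : ℝ, 0 < T → T < T0 →
      ¬ ∃ φ : ℝ, (NormedSpace.exp ((-(I * T)) • J)).mulVec (Pi.single 0 1) =
        Complex.exp (I * φ) • (Pi.single 2 1 : Fin 3 → ℂ)) :
    ¬ ∃ t : ℝ, 0 < t ∧ t < T0 ∧
      (NormedSpace.exp ((-(I * t)) • J)).mulVec (Pi.single 0 1) 0 = 0 := by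
  rintro ⟨t, ht0, htT, hzero⟩
  set A : Matrix (Fin 3) (Fin 3) ℂ := (-(I * t)) • J with hA
  set U : Matrix (Fin 3) (Fin 3) ℂ := NormedSpace.exp A with hU
  -- J is Hermitian
  have hJconj : Jᴴ = J := by
    subst hJ
    ext i j
    fin_cases i <;> fin_cases j <;>
      simp [conjTranspose_apply]
  -- A is skew-adjoint
  have hAstar : Aᴴ = -A := by
    rw [hA, conjTranspose_smul, hJconj]
    have : star (-(I * (t : ℂ))) = I * t := by
      simp [Complex.conj_ofReal]
    rw [this]
    module
  -- U is unitary: Uᴴ * U = 1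
  have hunit : Uᴴ * U = 1 := by
    rw [hU, ← Matrix.exp_conjTranspose, hAstar, ← Matrix.exp_add_of_commute (-A) A (Commute.neg_left (Commute.refl A))]
    simp
  -- the reversal matrix
  set R : Matrix (Fin 3) (Fin 3) ℂ := !![0,0,1;0,1,0;1,0,0] with hR
  have hJR : Commute J R := by
    subst hJ
    show _ * _ = _ * _
    ext i j
    fin_cases i <;> fin_cases j <;>
      simp [hR, Matrix.mul_apply, Fin.sum_univ_three, Matrix.vecHead, Matrix.vecTail]
  have hUR : U * R = R * U := (((hJR.smul_left (-(I * t))).exp_left))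
  -- column entries
  have hv0 : U 0 0 = 0 := by
    simpa [Matrix.mulVec, dotProduct, Fin.sum_univ_three, Pi.single_apply] using hzero
  -- persymmetry of U: relate column 2 to column 0
  have hcol : ∀ i : Fin 3, (U * R) i 0 = (R * U) i 0 := fun i => by rw [hUR]
  have h02 : U 0 2 = U 2 0 := by
    have := hcol 0
    simpa [Matrix.mul_apply, Fin.sum_univ_three, hR] using this
  have h12 : U 1 2 = U 1 0 := by
    have := hcol 1
    simpa [Matrix.mul_apply, Fin.sum_univ_three, hR] using this
  have h22 : U 2 2 = U 0 0 := by
    have := hcol 2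
    simpa [Matrix.mul_apply, Fin.sum_univ_three, hR] using this
  -- unitarity entry (0,2): gives U 1 0 = 0
  have e02 : (Uᴴ * U) 0 2 = (1 : Matrix (Fin 3) (Fin 3) ℂ) 0 2 := by rw [hunit]
  have hv1 : U 1 0 = 0 := by
    have h := e02
    simp [Matrix.mul_apply, Fin.sum_univ_three, Matrix.conjTranspose_apply,
      Matrix.one_apply, h02, h12, h22, hv0] at h
    simpa using h
  -- unitarity entry (0,0): gives |U 2 0| = 1
  have e00 : (Uᴴ * U) 0 0 = (1 : Matrix (Fin 3) (Fin 3) ℂ) 0 0 := by rw [hunit]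
  have hz1 : (starRingEnd ℂ) (U 2 0) * U 2 0 = 1 := by
    have := e00
    simp [Matrix.mul_apply, Fin.sum_univ_three, Matrix.conjTranspose_apply,
      Matrix.one_apply, hv0, hv1] at this
    linear_combination this
  set z : ℂ := U 2 0 with hzdef
  have hnsq : Complex.normSq z = 1 := by
    have h2 : (Complex.normSq z : ℂ) = 1 := by
      rw [Complex.normSq_eq_conj_mul_self]
      exact hz1
    exact_mod_cast h2
  have habs : ‖z‖ = 1 := by
    have h := Complex.sq_norm z
    rw [hnsq] at h
    nlinarith [norm_nonneg z]
  have hexp : Complex.exp (I * (Complex.arg z : ℂ)) = z := by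
    have := Complex.norm_mul_exp_arg_mul_I z
    rw [habs] at this
    simpa [mul_comm] using this
  -- PST at time t, contradicting minimality
  refine hEarliest t ht0 htT ⟨Complex.arg z, ?_⟩
  show U *ᵥ Pi.single 0 1 = _
  funext i
  fin_cases i <;>
    simp [Matrix.mulVec, dotProduct, Fin.sum_univ_three, Pi.single_apply, hv0, hv1, hexp, ← hzdef]
end

section
/- Let Q(x) = ∑_{j=k}^{n+1} A_j T_j(x) be a linear combination of Chebyshev polynomials of the first kind with A_k ≠ 0 and k ≤ n+1. Then Q changes sign at at least k distinct points in the open interval (−1,1). -/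
open Real Polynomial Set Finset

lemma intcos (r : ℤ) (hr : r ≠ 0) : ∫ x in (0:ℝ)..π, Real.cos (r * x) = 0 := by
  have hr' : (r : ℝ) ≠ 0 := Int.cast_ne_zero.mpr hr
  rw [intervalIntegral.integral_comp_mul_left (fun x => Real.cos x) hr']
  simp [Real.sin_int_mul_pi]

lemma prodsum (a b x : ℝ) : Real.cos (a*x) * Real.cos (b*x)
    = (Real.cos ((a+b)*x) + Real.cos ((a-b)*x)) / 2 := by
  rw [add_mul, sub_mul, Real.cos_add, Real.cos_sub]; ring

lemma intcospow (t : ℕ) : ∀ j : ℕ, t < j → ∫ x in (0:ℝ)..π, Real.cos (j * x) * Real.cos x ^ t = 0 := by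
  induction t with
  | zero =>
    intro j hj
    simpa using intcos j (by exact_mod_cast hj.ne')
  | succ t ih =>
    intro j hj
    have h1 : ∫ x in (0:ℝ)..π, Real.cos ((j+1 : ℕ) * x) * Real.cos x ^ t = 0 := ih _ (by omega)
    have h2 : ∫ x in (0:ℝ)..π, Real.cos ((j-1 : ℕ) * x) * Real.cos x ^ t = 0 := ih _ (by omega)
    have key : ∀ x : ℝ, Real.cos (j * x) * Real.cos x ^ (t+1)
        = (Real.cos ((j+1:ℕ) * x) * Real.cos x ^ t + Real.cos ((j-1:ℕ) * x) * Real.cos x ^ t) / 2 := by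
      intro x
      have e1 : ((j+1:ℕ):ℝ) = (j:ℝ) + 1 := by push_cast; ring
      have e2 : ((j-1:ℕ):ℝ) = (j:ℝ) - 1 := by
        have : 1 ≤ j := by omega
        push_cast [this]; ring
      rw [e1, e2]
      have := prodsum j 1 x
      rw [one_mul] at this
      rw [pow_succ]
      linear_combination Real.cos x ^ t * this
    rw [intervalIntegral.integral_congr (g := fun x => (Real.cos ((j+1:ℕ) * x) * Real.cos x ^ t + Real.cos ((j-1:ℕ) * x) * Real.cos x ^ t) / 2) (fun x _ => key x)]
    rw [intervalIntegral.integral_div, intervalIntegral.integral_add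
      ((Continuous.intervalIntegrable (by fun_prop) _ _))
      ((Continuous.intervalIntegrable (by fun_prop) _ _)), h1, h2]
    norm_num

lemma intcoscos {t j : ℕ} (h : t < j) : ∫ x in (0:ℝ)..π, Real.cos (j * x) * Real.cos (t * x) = 0 := by
  have key : ∀ x : ℝ, Real.cos (j*x) * Real.cos (t*x)
      = (Real.cos ((((j:ℤ)+t : ℤ):ℝ) * x) + Real.cos ((((j:ℤ)-t : ℤ):ℝ) * x)) / 2 := by
    intro x
    have := prodsum j t x
    push_cast
    push_cast at this
    linarith
  rw [intervalIntegral.integral_congr (g := fun x => (Real.cos ((((j:ℤ)+t : ℤ):ℝ) * x) + Real.cos ((((j:ℤ)-t : ℤ):ℝ) * x)) / 2) (fun x _ => key x)]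
  rw [intervalIntegral.integral_div, intervalIntegral.integral_add
      ((Continuous.intervalIntegrable (by fun_prop) _ _))
      ((Continuous.intervalIntegrable (by fun_prop) _ _))]
  rw [intcos _ (by omega), intcos _ (by omega)]
  norm_num

lemma intpos {f : ℝ → ℝ} (hf : Continuous f) (h0 : ∀ x, 0 ≤ f x) {θ₀ : ℝ}
    (hθ : θ₀ ∈ Set.Ioo 0 π) (hpos : 0 < f θ₀) : 0 < ∫ x in (0:ℝ)..π, f x := by
  rw [intervalIntegral.integral_pos_iff_support_of_nonneg_ae
    (Filter.Eventually.of_forall h0) (hf.intervalIntegrable _ _)]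
  refine ⟨pi_pos, ?_⟩
  obtain ⟨δ, hδpos, hδ⟩ := Metric.continuousAt_iff.mp hf.continuousAt (ε := f θ₀) hpos
  set δ' := min δ (min θ₀ (π - θ₀)) with hδ'
  have hδ'pos : 0 < δ' := by
    simp only [hδ', lt_min_iff]
    exact ⟨hδpos, hθ.1, by linarith [hθ.2]⟩
  have hsub : Set.Ioo (θ₀ - δ') (θ₀ + δ') ⊆ Function.support f ∩ Set.Ioc 0 π := by
    rintro x ⟨hx1, hx2⟩
    have hd : dist x θ₀ < δ := by
      rw [Real.dist_eq, abs_lt]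
      constructor <;>
        · have := min_le_left δ (min θ₀ (π - θ₀)); simp only [hδ'] at hx1 hx2 ⊢; linarith
    have := hδ hd
    rw [Real.dist_eq, abs_lt] at this
    refine ⟨by simp only [Function.mem_support]; intro h; rw [h] at this; linarith [this.1], ?_, ?_⟩
    · have h1 : δ' ≤ θ₀ := le_trans (min_le_right _ _) (min_le_left _ _)
      linarith
    · have h2 : δ' ≤ π - θ₀ := le_trans (min_le_right _ _) (min_le_right _ _)
      linarith
  calc (0:ENNReal) < MeasureTheory.volume (Set.Ioo (θ₀ - δ') (θ₀ + δ')) := by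
        rw [Real.volume_Ioo]; simp; linarith
    _ ≤ _ := MeasureTheory.measure_mono hsub

lemma signchange_core (H : Polynomial ℝ) (hH : H ≠ 0) {a b : ℝ} (hab : a < b)
    (ha : H.eval a < 0) (hb : 0 < H.eval b) :
    ∃ c ∈ Set.Ioo a b, Odd (H.rootMultiplicity c) := by
  set S : Set ℝ := {x | x ∈ Set.Icc a b ∧ H.eval x < 0} with hS
  have hSne : S.Nonempty := ⟨a, ⟨le_refl a, hab.le⟩, ha⟩
  have hSbdd : BddAbove S := ⟨b, fun x hx => hx.1.2⟩
  set c := sSup S with hc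
  have hcmem : ∀ x ∈ S, x ≤ c := fun x hx => le_csSup hSbdd hx
  have hcb : c ≤ b := csSup_le hSne (fun x hx => hx.1.2)
  have hca : a ≤ c := hcmem a ⟨⟨le_refl a, hab.le⟩, ha⟩
  have hclosure : c ∈ closure S := csSup_mem_closure hSne hSbdd
  have hevc : H.eval c ≤ 0 := by
    have hcl : closure S ⊆ {x | H.eval x ≤ 0} := by
      apply closure_minimal _ (isClosed_le (by fun_prop) continuous_const)
      exact fun x hx => hx.2.le
    exact hcl hclosure
  have hcltb : c < b := lt_of_le_of_ne hcb (fun h => by rw [h] at hevc; linarith)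
  have hright : ∀ x, c < x → x ≤ b → 0 ≤ H.eval x := by
    intro x hcx hxb
    by_contra h
    push_neg at h
    exact absurd (hcmem x ⟨⟨by linarith, hxb⟩, h⟩) (not_le.mpr hcx)
  have hevc0 : H.eval c = 0 := by
    by_contra h
    have hlt : H.eval c < 0 := lt_of_le_of_ne hevc h
    obtain ⟨δ, hδpos, hδ⟩ := Metric.continuousAt_iff.mp
      (Polynomial.continuous H).continuousAt (ε := -H.eval c) (by linarith)
    set x := min (c + δ/2) ((c+b)/2) with hx
    have hxc : c < x := by simp [hx, lt_min_iff]; constructor <;> linarith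
    have hxb : x ≤ b := le_trans (min_le_right _ _) (by linarith)
    have hdist : dist x c < δ := by
      rw [Real.dist_eq, abs_lt]
      have := min_le_left (c + δ/2) ((c+b)/2)
      constructor <;> simp only [hx] at * <;> linarith
    have := hδ hdist
    rw [Real.dist_eq, abs_lt] at this
    have : H.eval x < 0 := by linarith [this.2]
    linarith [hright x hxc hxb]
  have hcgta : a < c := lt_of_le_of_ne hca (fun h => by rw [← h] at hevc0; linarith)
  refine ⟨c, ⟨hcgta, hcltb⟩, ?_⟩
  set r := H.rootMultiplicity c with hr
  set g := H /ₘ (X - C c) ^ r with hg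
  have hfact : (X - C c) ^ r * g = H := Polynomial.pow_mul_divByMonic_rootMultiplicity_eq H c
  have hgc : g.eval c ≠ 0 := Polynomial.eval_divByMonic_pow_rootMultiplicity_ne_zero c hH
  by_contra hodd
  rw [Nat.not_odd_iff_even] at hodd
  obtain ⟨δ, hδpos, hδ⟩ := Metric.continuousAt_iff.mp
    (Polynomial.continuous g).continuousAt (ε := |g.eval c|) (abs_pos.mpr hgc)
  have hsign : ∀ x, dist x c < δ → x ≠ c → (0 < g.eval x ↔ 0 < g.eval c) := by
    intro x hx _
    have := hδ hx
    rw [Real.dist_eq] at this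
    cases' abs_lt.mp this with h1 h2
    cases' lt_or_ge 0 (g.eval c) with h h
    · rw [abs_of_pos h] at h1 h2; constructor <;> intro <;> linarith
    · have hlt : g.eval c < 0 := lt_of_le_of_ne h hgc
      rw [abs_of_neg hlt] at h1 h2; constructor <;> intro <;> linarith
  obtain ⟨u, huS, huc⟩ := exists_lt_of_lt_csSup hSne (show c - min δ (c - a) /2 < c by
    have h1 : 0 < min δ (c-a) := lt_min hδpos (by linarith)
    linarith)
  have huc' : u ≤ c := hcmem u huS
  have hune : u ≠ c := fun h => by rw [h] at huS; exact absurd hevc0 (ne_of_lt huS.2)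
  have hult : u < c := lt_of_le_of_ne huc' hune
  have hud : dist u c < δ := by
    rw [Real.dist_eq, abs_lt]
    have h2 : min δ (c-a) ≤ δ := min_le_left _ _
    constructor <;> linarith
  have hpowu : 0 < (u - c)^r := hodd.pow_pos (by linarith)
  have hgu : g.eval u < 0 := by
    have : H.eval u = (u - c)^r * g.eval u := by
      rw [← hfact]; simp [Polynomial.eval_pow]
    nlinarith [huS.2]
  have hgcneg : ¬ (0 < g.eval c) := fun h => by
    have := (hsign u hud hune).mpr h; linarith
  have hroots : Set.Finite {x | H.IsRoot x} := Polynomial.finite_setOf_isRoot hH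
  have hIoo : Set.Infinite (Set.Ioo c (min (c+δ) b)) := Set.Ioo_infinite (by
    rw [lt_min_iff]; constructor <;> linarith)
  obtain ⟨v, hv, hvroot⟩ := (hIoo.diff hroots).nonempty
  have hvc : c < v := hv.1
  have hvd : dist v c < δ := by
    rw [Real.dist_eq, abs_lt]
    have := hv.2
    rw [lt_min_iff] at this
    constructor <;> linarith [this.1]
  have hvb : v ≤ b := le_of_lt (lt_of_lt_of_le hv.2 (min_le_right _ _))
  have hvpos : 0 < H.eval v := lt_of_le_of_ne (hright v hvc hvb)
    (fun h => hvroot (by simp [Polynomial.IsRoot, ← h]))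
  have hpowv : 0 < (v - c)^r := hodd.pow_pos (by linarith)
  have hgv : 0 < g.eval v := by
    have : H.eval v = (v - c)^r * g.eval v := by
      rw [← hfact]; simp [Polynomial.eval_pow]
    nlinarith
  exact hgcneg ((hsign v hvd (ne_of_gt hvc)).mp hgv)

lemma rm_neg (H : Polynomial ℝ) (hH : H ≠ 0) (c : ℝ) :
    (-H).rootMultiplicity c = H.rootMultiplicity c := by
  have h : -H = C (-1) * H := by simp
  rw [h, Polynomial.rootMultiplicity_mul (by simp [hH]),
    Polynomial.rootMultiplicity_eq_zero (by simp [Polynomial.IsRoot]), zero_add]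

lemma no_both_signs (H : Polynomial ℝ) (hH : H ≠ 0)
    (hmult : ∀ c ∈ Set.Ioo (-1:ℝ) 1, ¬ Odd (H.rootMultiplicity c))
    {a b : ℝ} (ha : a ∈ Set.Ioo (-1:ℝ) 1) (hb : b ∈ Set.Ioo (-1:ℝ) 1)
    (hA : H.eval a < 0) : H.eval b ≤ 0 := by
  by_contra h
  push_neg at h
  rcases lt_trichotomy a b with hab | hab | hab
  · obtain ⟨c, hc, hodd⟩ := signchange_core H hH hab hA h
    exact hmult c ⟨lt_trans ha.1 hc.1, lt_trans hc.2 hb.2⟩ hodd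
  · rw [hab] at hA; linarith
  · obtain ⟨c, hc, hodd⟩ := signchange_core (-H) (neg_ne_zero.mpr hH) hab
      (by simpa using h) (by simpa using hA)
    rw [rm_neg H hH c] at hodd
    exact hmult c ⟨lt_trans hb.1 hc.1, lt_trans hc.2 ha.2⟩ hodd

lemma oddmult_signchange (P : Polynomial ℝ) (hP : P ≠ 0) {c : ℝ}
    (hc : c ∈ Set.Ioo (-1:ℝ) 1) (hodd : Odd (P.rootMultiplicity c)) :
    ∀ ε > 0, (∃ a ∈ Set.Ioo (-1:ℝ) 1, |a - c| < ε ∧ P.eval a < 0) ∧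
             (∃ b ∈ Set.Ioo (-1:ℝ) 1, |b - c| < ε ∧ 0 < P.eval b) := by
  intro ε hε
  set r := P.rootMultiplicity c with hr
  set g := P /ₘ (X - C c) ^ r with hg
  have hfact : (X - C c) ^ r * g = P := Polynomial.pow_mul_divByMonic_rootMultiplicity_eq P c
  have hgc : g.eval c ≠ 0 := Polynomial.eval_divByMonic_pow_rootMultiplicity_ne_zero c hP
  obtain ⟨δ₀, hδ₀pos, hδ₀⟩ := Metric.continuousAt_iff.mp
    (Polynomial.continuous g).continuousAt (ε := |g.eval c|) (abs_pos.mpr hgc)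
  set δ := min (min (ε/2) (δ₀/2)) (min ((1 - c)/2) ((c + 1)/2)) with hδ
  have hδpos : 0 < δ := by
    simp only [hδ, lt_min_iff]
    refine ⟨⟨by linarith, by linarith⟩, by linarith [hc.2], by linarith [hc.1]⟩
  have hδε : δ < ε := lt_of_le_of_lt (le_trans (min_le_left _ _) (min_le_left _ _)) (by linarith)
  have hδδ₀ : δ < δ₀ := lt_of_le_of_lt (le_trans (min_le_left _ _) (min_le_right _ _)) (by linarith)
  have hδ1 : δ ≤ (1 - c)/2 := le_trans (min_le_right _ _) (min_le_left _ _)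
  have hδ2 : δ ≤ (c + 1)/2 := le_trans (min_le_right _ _) (min_le_right _ _)
  set u := c - δ with hu
  set v := c + δ with hv
  have huc : u - c = -δ := by rw [hu]; ring
  have hvc : v - c = δ := by rw [hv]; ring
  have huIoo : u ∈ Set.Ioo (-1:ℝ) 1 := ⟨by rw [hu]; linarith [hc.1], by rw [hu]; linarith [hc.2]⟩
  have hvIoo : v ∈ Set.Ioo (-1:ℝ) 1 := ⟨by rw [hv]; linarith [hc.1], by rw [hv]; linarith [hc.2]⟩
  have huε : |u - c| < ε := by rw [huc, abs_neg, abs_of_pos hδpos]; exact hδε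
  have hvε : |v - c| < ε := by rw [hvc, abs_of_pos hδpos]; exact hδε
  have hgu : |g.eval u - g.eval c| < |g.eval c| := by
    have hd : dist u c < δ₀ := by rw [Real.dist_eq, huc, abs_neg, abs_of_pos hδpos]; exact hδδ₀
    simpa [Real.dist_eq] using hδ₀ hd
  have hgv : |g.eval v - g.eval c| < |g.eval c| := by
    have hd : dist v c < δ₀ := by rw [Real.dist_eq, hvc, abs_of_pos hδpos]; exact hδδ₀
    simpa [Real.dist_eq] using hδ₀ hd
  have hevu : P.eval u = (-δ)^r * g.eval u := by
    rw [← hfact]; simp only [eval_mul, eval_pow, eval_sub, eval_X, eval_C, huc]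
  have hevv : P.eval v = δ^r * g.eval v := by
    rw [← hfact]; simp only [eval_mul, eval_pow, eval_sub, eval_X, eval_C, hvc]
  have hnegpow : (-δ:ℝ)^r = -(δ^r) := hodd.neg_pow δ
  have hpow : 0 < δ^r := pow_pos hδpos r
  rcases lt_or_ge 0 (g.eval c) with h | h
  · rw [abs_of_pos h] at hgu hgv
    have h1 : 0 < g.eval u := by cases' abs_lt.mp hgu with h1 h2; linarith
    have h2 : 0 < g.eval v := by cases' abs_lt.mp hgv with h1 h2; linarith
    exact ⟨⟨u, huIoo, huε, by rw [hevu, hnegpow]; nlinarith⟩,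
           ⟨v, hvIoo, hvε, by rw [hevv]; nlinarith⟩⟩
  · have hcneg : g.eval c < 0 := lt_of_le_of_ne h hgc
    rw [abs_of_neg hcneg] at hgu hgv
    have h1 : g.eval u < 0 := by cases' abs_lt.mp hgu with h1 h2; linarith
    have h2 : g.eval v < 0 := by cases' abs_lt.mp hgv with h1 h2; linarith
    exact ⟨⟨v, hvIoo, hvε, by rw [hevv]; nlinarith⟩,
           ⟨u, huIoo, huε, by rw [hevu, hnegpow]; nlinarith⟩⟩

lemma final_contra (G : Polynomial ℝ) (hG : G ≠ 0)
    (hnn : ∀ x ∈ Set.Ioo (-1:ℝ) 1, 0 ≤ G.eval x)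
    (hint : ∫ θ in (0:ℝ)..π, G.eval (Real.cos θ) = 0) : False := by
  have hIcc : ∀ x ∈ Set.Icc (-1:ℝ) 1, 0 ≤ G.eval x := by
    have hsub : Set.Icc (-1:ℝ) 1 ⊆ {x | 0 ≤ G.eval x} := by
      rw [← closure_Ioo (by norm_num : (-1:ℝ) ≠ 1)]
      exact closure_minimal hnn (isClosed_le continuous_const (Polynomial.continuous G))
    exact fun x hx => hsub hx
  obtain ⟨x₀, hx₀, hx₀root⟩ := ((Set.Ioo_infinite (by norm_num : (-1:ℝ) < 1)).diff
    (Polynomial.finite_setOf_isRoot hG)).nonempty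
  have hx₀pos : 0 < G.eval x₀ := lt_of_le_of_ne (hIcc x₀ (Set.mem_Icc_of_Ioo hx₀))
    (fun h => hx₀root (by simp [Polynomial.IsRoot, ← h]))
  have harc1 : Real.arccos x₀ ∈ Set.Ioo 0 π :=
    ⟨Real.arccos_pos.mpr hx₀.2, lt_of_le_of_ne (Real.arccos_le_pi x₀)
      (fun h => by have := Real.arccos_eq_pi.mp h; linarith [hx₀.1])⟩
  have hcosval : Real.cos (Real.arccos x₀) = x₀ :=
    Real.cos_arccos (by linarith [hx₀.1]) (by linarith [hx₀.2])
  have := intpos (f := fun θ => G.eval (Real.cos θ))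
    ((Polynomial.continuous G).comp Real.continuous_cos)
    (fun θ => hIcc _ ⟨Real.neg_one_le_cos θ, Real.cos_le_one θ⟩) harc1
    (by simpa [hcosval] using hx₀pos)
  rw [hint] at this; exact lt_irrefl 0 this

/-- A quasi-orthogonal combination `Q = ∑_{j=k}^{n+1} A_j T_j` of Chebyshev
polynomials with `A_k ≠ 0` changes sign at at least `k` distinct points of `(−1,1)`. -/
theorem stmt14 (n k : ℕ) (hk : k ≤ n + 1) (A : ℕ → ℝ) (hA : A k ≠ 0)
    (Q : ℝ → ℝ)
    (hQ : Q = fun x => ∑ j ∈ Finset.Icc k (n + 1),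
        A j * (Polynomial.Chebyshev.T ℝ (j : ℤ)).eval x) :
    ∃ y : Fin k → ℝ, StrictMono y ∧
      ∀ i, y i ∈ Set.Ioo (-1 : ℝ) 1 ∧
        ∀ ε > 0, (∃ a ∈ Set.Ioo (-1 : ℝ) 1, |a - y i| < ε ∧ Q a < 0) ∧
                 (∃ b ∈ Set.Ioo (-1 : ℝ) 1, |b - y i| < ε ∧ 0 < Q b) := by
  classical
  set P : Polynomial ℝ := ∑ j ∈ Finset.Icc k (n+1), C (A j) * Polynomial.Chebyshev.T ℝ (j:ℤ)
    with hP
  have keyeval : ∀ θ:ℝ, P.eval (Real.cos θ)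
      = ∑ j ∈ Finset.Icc k (n+1), A j * Real.cos (j*θ) := by
    intro θ
    rw [hP, Polynomial.eval_finset_sum]
    apply Finset.sum_congr rfl
    intro j hj
    rw [Polynomial.eval_mul, Polynomial.eval_C, Polynomial.Chebyshev.T_real_cos]
    norm_num
  have hQP : ∀ x, Q x = P.eval x := by
    intro x
    rw [hQ, hP, Polynomial.eval_finset_sum]
    apply Finset.sum_congr rfl
    intro j hj
    rw [Polynomial.eval_mul, Polynomial.eval_C]
  have hkmem : k ∈ Finset.Icc k (n+1) := Finset.mem_Icc.mpr ⟨le_refl k, hk⟩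
  -- P ≠ 0
  have hPne : P ≠ 0 := by
    intro hP0
    have hzero : ∀ θ:ℝ, (∑ j ∈ Finset.Icc k (n+1), A j * Real.cos (j*θ)) = 0 := by
      intro θ; rw [← keyeval θ, hP0, Polynomial.eval_zero]
    have hI : ∫ θ in (0:ℝ)..π,
        (∑ j ∈ Finset.Icc k (n+1), A j * Real.cos (j*θ)) * Real.cos (k*θ) = 0 := by
      rw [intervalIntegral.integral_congr (g := fun _ => (0:ℝ))
        (fun θ _ => by rw [hzero]; ring)]
      simp
    have hI2 : ∫ θ in (0:ℝ)..π,
        (∑ j ∈ Finset.Icc k (n+1), A j * Real.cos (j*θ)) * Real.cos (k*θ)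
        = ∑ j ∈ Finset.Icc k (n+1), A j * ∫ θ in (0:ℝ)..π, Real.cos (j*θ) * Real.cos (k*θ) := by
      rw [intervalIntegral.integral_congr
        (g := fun θ => ∑ j ∈ Finset.Icc k (n+1), A j * (Real.cos (j*θ) * Real.cos (k*θ)))
        (fun θ _ => by rw [Finset.sum_mul]; exact Finset.sum_congr rfl fun j _ => by ring)]
      rw [intervalIntegral.integral_finset_sum
        (fun j _ => Continuous.intervalIntegrable (by fun_prop) _ _)]
      exact Finset.sum_congr rfl fun j _ => intervalIntegral.integral_const_mul _ _
    have hsingle : ∑ j ∈ Finset.Icc k (n+1), A j * ∫ θ in (0:ℝ)..π,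
        Real.cos (j*θ) * Real.cos (k*θ)
        = A k * ∫ θ in (0:ℝ)..π, Real.cos (k*θ) * Real.cos (k*θ) :=
      Finset.sum_eq_single_of_mem k hkmem (fun j hj hne => by
        rw [intcoscos (lt_of_le_of_ne (Finset.mem_Icc.mp hj).1 (Ne.symm hne)), mul_zero])
    have hIkpos : 0 < ∫ θ in (0:ℝ)..π, Real.cos (k*θ) * Real.cos (k*θ) := by
      have hk2 : (0:ℝ) < 2*(k:ℝ)+2 := by positivity
      refine intpos (by fun_prop) (fun θ => mul_self_nonneg _)
        (θ₀ := π/(2*(k:ℝ)+2)) ⟨by positivity, ?_⟩ ?_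
      · rw [div_lt_iff₀ hk2]
        nlinarith [pi_pos, Nat.cast_nonneg (α := ℝ) k]
      · have hcpos : 0 < Real.cos ((k:ℝ) * (π/(2*(k:ℝ)+2))) := by
          apply Real.cos_pos_of_mem_Ioo
          constructor
          · have : 0 ≤ (k:ℝ) * (π/(2*(k:ℝ)+2)) := by positivity
            linarith [pi_pos]
          · rw [mul_div_assoc']
            rw [div_lt_div_iff₀ hk2 (by norm_num : (0:ℝ) < 2)]
            nlinarith [pi_pos, Nat.cast_nonneg (α := ℝ) k]
        exact mul_pos hcpos hcpos
    rw [hI, hsingle] at hI2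
    exact hA (by nlinarith [hI2.symm, hIkpos])
  -- sign-change set
  set S : Set ℝ := {c | c ∈ Set.Ioo (-1:ℝ) 1 ∧ Odd (P.rootMultiplicity c)} with hS
  have hSfin : S.Finite := by
    apply (Polynomial.finite_setOf_isRoot hPne).subset
    intro c hc
    have hc2 : Odd (P.rootMultiplicity c) := hc.2
    have h1 : P.rootMultiplicity c ≠ 0 := by
      intro h; rw [h] at hc2; exact (Nat.not_odd_iff_even.mpr (Even.zero)) hc2
    exact (Polynomial.rootMultiplicity_pos hPne).mp (Nat.pos_of_ne_zero h1)
  set T : Finset ℝ := hSfin.toFinset with hT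
  by_cases hcard : k ≤ T.card
  · obtain ⟨T', hT'sub, hT'card⟩ := Finset.exists_subset_card_eq hcard
    refine ⟨fun i => T'.orderEmbOfFin hT'card i,
      fun i j hij => (T'.orderEmbOfFin hT'card).strictMono hij, ?_⟩
    intro i
    have hmem : T'.orderEmbOfFin hT'card i ∈ T' := Finset.orderEmbOfFin_mem T' hT'card i
    have hSmem : (T'.orderEmbOfFin hT'card i : ℝ) ∈ S := by
      have := hT'sub hmem
      rwa [hT, Set.Finite.mem_toFinset] at this
    refine ⟨hSmem.1, fun ε hε => ?_⟩
    obtain ⟨⟨a, haI, haε, haneg⟩, ⟨b, hbI, hbε, hbpos⟩⟩ :=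
      oddmult_signchange P hPne hSmem.1 hSmem.2 ε hε
    exact ⟨⟨a, haI, haε, by rw [hQP]; exact haneg⟩,
           ⟨b, hbI, hbε, by rw [hQP]; exact hbpos⟩⟩
  · push_neg at hcard
    exfalso
    set p : Polynomial ℝ := ∏ c ∈ T, (X - C c) with hp
    have hpmonic : p.Monic := monic_prod_of_monic _ _ (fun c _ => monic_X_sub_C c)
    have hpne : p ≠ 0 := hpmonic.ne_zero
    have hpdeg : p.natDegree < k := by
      apply lt_of_le_of_lt _ hcard
      calc p.natDegree ≤ ∑ c ∈ T, (X - C c).natDegree := Polynomial.natDegree_prod_le _ _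
        _ = T.card := by simp [Polynomial.natDegree_X_sub_C]
    set H := P * p with hH
    have hHne : H ≠ 0 := mul_ne_zero hPne hpne
    have hrmp : ∀ c : ℝ, p.rootMultiplicity c = if c ∈ T then 1 else 0 := by
      intro c
      rw [← Polynomial.count_roots, hp, Polynomial.roots_prod_X_sub_C]
      split_ifs with h
      · exact Multiset.count_eq_one_of_mem T.nodup (Finset.mem_val.mpr h)
      · exact Multiset.count_eq_zero_of_notMem (fun hh => h (Finset.mem_val.mp hh))
    have hmult : ∀ c ∈ Set.Ioo (-1:ℝ) 1, ¬ Odd (H.rootMultiplicity c) := by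
      intro c hc hodd
      rw [hH, Polynomial.rootMultiplicity_mul (by rw [← hH]; exact hHne), hrmp] at hodd
      by_cases hcT : c ∈ T
      · have hcS : c ∈ S := by rwa [hT, Set.Finite.mem_toFinset] at hcT
        rw [if_pos hcT] at hodd
        obtain ⟨m, hm⟩ := hcS.2
        obtain ⟨l, hl⟩ := hodd
        omega
      · have hcS : c ∉ S := by rw [hT, Set.Finite.mem_toFinset] at hcT; exact hcT
        rw [if_neg hcT, add_zero] at hodd
        exact hcS ⟨hc, hodd⟩
    have hHint : ∫ θ in (0:ℝ)..π, H.eval (Real.cos θ) = 0 := by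
      have hfeq : ∀ θ:ℝ, H.eval (Real.cos θ)
          = ∑ j ∈ Finset.Icc k (n+1), ∑ t ∈ Finset.range (p.natDegree+1),
            (A j * p.coeff t) * (Real.cos (j*θ) * Real.cos θ ^ t) := by
        intro θ
        rw [hH, Polynomial.eval_mul, keyeval θ, Finset.sum_mul]
        apply Finset.sum_congr rfl
        intro j hj
        rw [Polynomial.eval_eq_sum_range, Finset.mul_sum]
        exact Finset.sum_congr rfl fun t ht => by ring
      rw [intervalIntegral.integral_congr
        (g := fun θ => ∑ j ∈ Finset.Icc k (n+1), ∑ t ∈ Finset.range (p.natDegree+1),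
          (A j * p.coeff t) * (Real.cos (j*θ) * Real.cos θ ^ t))
        (fun θ _ => hfeq θ)]
      rw [intervalIntegral.integral_finset_sum
        (fun j _ => Continuous.intervalIntegrable (by fun_prop) _ _)]
      apply Finset.sum_eq_zero
      intro j hj
      rw [intervalIntegral.integral_finset_sum
        (fun t _ => Continuous.intervalIntegrable (by fun_prop) _ _)]
      apply Finset.sum_eq_zero
      intro t ht
      have htj : t < j := by
        have h1 : t ≤ p.natDegree := Nat.lt_succ_iff.mp (Finset.mem_range.mp ht)
        have h2 : k ≤ j := (Finset.mem_Icc.mp hj).1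
        omega
      rw [intervalIntegral.integral_const_mul, intcospow t j htj, mul_zero]
    rcases em (∃ x ∈ Set.Ioo (-1:ℝ) 1, H.eval x < 0) with ⟨a, haI, haneg⟩ | hnoneg
    · have hle : ∀ b ∈ Set.Ioo (-1:ℝ) 1, H.eval b ≤ 0 :=
        fun b hb => no_both_signs H hHne hmult haI hb haneg
      exact final_contra (-H) (neg_ne_zero.mpr hHne)
        (fun x hx => by rw [Polynomial.eval_neg]; linarith [hle x hx])
        (by simp only [Polynomial.eval_neg]; rw [intervalIntegral.integral_neg, hHint, neg_zero])
    · push_neg at hnoneg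
      exact final_contra H hHne hnoneg hHint
end

section
/- Let n>1, m ≥ 1 be integers and let w₀,...,w_{n−1} be reals with w_{n−1} ≠ 0. Define f(t) = ∑_{s=0}^{n−1} 2 w_s cos((2n+2m−2s−1) t/2). Then f has at least 2m+1 distinct zeros in (0, 2π), and (using |f(π+t)| = |f(π−t)| together with f(π)=0 when f vanishes there) at least m distinct zeros in (0, π) provided f(π) = 0. -/
open Finset Real

section Helpers17
open intervalIntegral Complex
lemma int_exp_even (q : ℤ) (hq : Even q) (h0 : q ≠ 0) :
    (∫ t in (0:ℝ)..(2*π), Complex.exp (Complex.I * q * t / 2)) = 0 := by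
  obtain ⟨k, hk⟩ := hq
  have hc : (Complex.I * q / 2) ≠ 0 := by
    simp [Complex.I_ne_zero, Complex.ext_iff]
    exact_mod_cast h0
  have h1 : (∫ t in (0:ℝ)..(2*π), Complex.exp ((Complex.I * q / 2) * t))
      = (Complex.exp ((Complex.I * q / 2) * ((2*π:ℝ):ℂ)) - Complex.exp ((Complex.I * q / 2) * ((0:ℝ):ℂ))) / (Complex.I * q / 2) :=
    integral_exp_mul_complex hc
  have h2 : Complex.exp ((Complex.I * q / 2) * ((2*π:ℝ):ℂ)) = 1 := by
    have : ((Complex.I * q / 2) * ((2*π:ℝ):ℂ)) = (k : ℤ) * (2 * π * Complex.I) := by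
      push_cast [hk]; ring
    rw [this, Complex.exp_int_mul_two_pi_mul_I]
  calc (∫ t in (0:ℝ)..(2*π), Complex.exp (Complex.I * q * t / 2))
      = ∫ t in (0:ℝ)..(2*π), Complex.exp ((Complex.I * q / 2) * t) := by
        congr 1; ext t; ring_nf
    _ = 0 := by rw [h1, h2]; simp

lemma orth_exp {ι : Type*} [DecidableEq ι] (c : Finset ι) (a : ι → ℝ) :
    ∀ q : ℤ, Even (q + c.card) → (c.card : ℤ) < |q| →
    (∫ t in (0:ℝ)..(2*π), Complex.exp (Complex.I * q * t / 2) *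
      ∏ i ∈ c, Complex.sin (((t:ℂ) - (a i:ℂ))/2)) = 0 := by
  induction c using Finset.induction with
  | empty =>
    intro q hpar hlt
    have h0 : q ≠ 0 := by intro h; rw [h] at hlt; simp at hlt
    simpa using int_exp_even q (by simpa using hpar) h0
  | @insert i s hi ih =>
    intro q hpar hlt
    rw [Finset.card_insert_of_notMem hi] at hpar hlt
    have hpar' := (Int.even_iff).2 ((Int.even_iff).1 hpar)
    have key : ∀ t : ℝ, Complex.exp (Complex.I * q * t / 2) *
        ∏ j ∈ insert i s, Complex.sin (((t:ℂ) - (a j:ℂ))/2)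
        = (Complex.I/2 * Complex.exp (Complex.I * (a i) / 2)) *
            (Complex.exp (Complex.I * (q-1) * t / 2) * ∏ j ∈ s, Complex.sin (((t:ℂ) - (a j:ℂ))/2))
          - (Complex.I/2 * Complex.exp (-(Complex.I * (a i)) / 2)) *
            (Complex.exp (Complex.I * (q+1) * t / 2) * ∏ j ∈ s, Complex.sin (((t:ℂ) - (a j:ℂ))/2)) := by
      intro t
      have e1 : Complex.exp (Complex.I * q * t / 2) * Complex.exp (-(((t:ℂ) - (a i:ℂ))/2) * Complex.I)
          = Complex.exp (Complex.I * (a i) / 2) * Complex.exp (Complex.I * (q-1) * t / 2) := by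
        rw [← Complex.exp_add, ← Complex.exp_add]; congr 1; push_cast; ring
      have e2 : Complex.exp (Complex.I * q * t / 2) * Complex.exp ((((t:ℂ) - (a i:ℂ))/2) * Complex.I)
          = Complex.exp (-(Complex.I * (a i)) / 2) * Complex.exp (Complex.I * (q+1) * t / 2) := by
        rw [← Complex.exp_add, ← Complex.exp_add]; congr 1; push_cast; ring
      rw [Finset.prod_insert hi, Complex.sin]
      calc Complex.exp (Complex.I * q * t / 2) *
            ((Complex.exp (-(((t:ℂ) - (a i:ℂ))/2) * Complex.I) - Complex.exp ((((t:ℂ) - (a i:ℂ))/2) * Complex.I)) * Complex.I / 2 *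
              ∏ j ∈ s, Complex.sin (((t:ℂ) - (a j:ℂ))/2))
          = ((Complex.exp (Complex.I * q * t / 2) * Complex.exp (-(((t:ℂ) - (a i:ℂ))/2) * Complex.I))
              - (Complex.exp (Complex.I * q * t / 2) * Complex.exp ((((t:ℂ) - (a i:ℂ))/2) * Complex.I)))
              * Complex.I / 2 * ∏ j ∈ s, Complex.sin (((t:ℂ) - (a j:ℂ))/2) := by ring
        _ = _ := by rw [e1, e2]; ring
    have cont : ∀ (p:ℂ), Continuous fun t:ℝ => Complex.exp (Complex.I * p * t / 2) *
        ∏ j ∈ s, Complex.sin (((t:ℂ) - (a j:ℂ))/2) := by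
      intro p; fun_prop
    have i1 := ih (q-1) (by rw [Int.even_iff] at *; omega)
      (by rcases abs_cases q with ⟨e1,e2⟩|⟨e1,e2⟩ <;> rcases abs_cases (q-1) with ⟨f1,f2⟩|⟨f1,f2⟩ <;> omega)
    have i2 := ih (q+1) (by rw [Int.even_iff] at *; omega)
      (by rcases abs_cases q with ⟨e1,e2⟩|⟨e1,e2⟩ <;> rcases abs_cases (q+1) with ⟨f1,f2⟩|⟨f1,f2⟩ <;> omega)
    push_cast at i1 i2
    rw [intervalIntegral.integral_congr (fun t _ => key t),
      intervalIntegral.integral_sub ((continuous_const.fun_mul (cont ((q:ℂ)-1))).intervalIntegrable _ _)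
        ((continuous_const.fun_mul (cont ((q:ℂ)+1))).intervalIntegrable _ _),
      intervalIntegral.integral_const_mul, intervalIntegral.integral_const_mul]
    push_cast
    rw [i1, i2]
    ring

lemma orthR {ι : Type*} [DecidableEq ι] (c : Finset ι) (a : ι → ℝ) (d : ℕ)
    (hd : Odd d) (hc : Odd c.card) (hlt : c.card < d) :
    (∫ t in (0:ℝ)..(2*π), Real.cos (d * t / 2) * ∏ i ∈ c, Real.sin ((t - a i)/2)) = 0 := by
  have par1 : Even ((d:ℤ) + c.card) := by
    rw [Int.even_iff]; rw [Nat.odd_iff] at hd hc; omega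
  have par2 : Even ((-(d:ℤ)) + c.card) := by
    rw [Int.even_iff]; rw [Nat.odd_iff] at hd hc; omega
  have lt1 : (c.card : ℤ) < |(d:ℤ)| := by
    rw [_root_.abs_of_nonneg (by positivity : (0:ℤ) ≤ (d:ℤ))]; exact_mod_cast hlt
  have lt2 : (c.card : ℤ) < |(-(d:ℤ))| := by rwa [abs_neg]
  have key : ∀ t : ℝ, (((Real.cos (d * t / 2) * ∏ i ∈ c, Real.sin ((t - a i)/2)) : ℝ) : ℂ)
      = (1/2) * (Complex.exp (Complex.I * ((d:ℤ):ℂ) * t / 2) * ∏ i ∈ c, Complex.sin (((t:ℂ) - (a i:ℂ))/2))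
        + (1/2) * (Complex.exp (Complex.I * (((-(d:ℤ)):ℤ):ℂ) * t / 2) * ∏ i ∈ c, Complex.sin (((t:ℂ) - (a i:ℂ))/2)) := by
    intro t
    push_cast
    rw [Complex.cos]
    ring_nf
  have cont : ∀ (p:ℂ), Continuous fun t:ℝ => Complex.exp (Complex.I * p * t / 2) *
      ∏ j ∈ c, Complex.sin (((t:ℂ) - (a j:ℂ))/2) := by
    intro p; fun_prop
  have hcomplex : (∫ t in (0:ℝ)..(2*π),
      (((Real.cos (d * t / 2) * ∏ i ∈ c, Real.sin ((t - a i)/2)) : ℝ) : ℂ)) = 0 := by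
    rw [intervalIntegral.integral_congr (fun t _ => key t),
      intervalIntegral.integral_add ((continuous_const.fun_mul (cont _)).intervalIntegrable _ _)
        ((continuous_const.fun_mul (cont _)).intervalIntegrable _ _),
      intervalIntegral.integral_const_mul, intervalIntegral.integral_const_mul,
      orth_exp c a (d:ℤ) par1 lt1, orth_exp c a (-(d:ℤ)) par2 lt2]
    simp
  rw [intervalIntegral.integral_ofReal] at hcomplex
  exact_mod_cast hcomplex

lemma mul_pos_iff' {a b : ℝ} (ha : a ≠ 0) (hb : b ≠ 0) : 0 < a * b ↔ (0 < a ↔ 0 < b) := by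
  rw [mul_pos_iff]
  rcases ha.lt_or_gt with h|h <;> rcases hb.lt_or_gt with h'|h' <;>
    simp [h, h', h.not_gt, h'.not_gt]

lemma flip_parity (N : ℕ) (σ : ℕ → ℝ) (h : ∀ j, j ≤ N → σ j ≠ 0) :
    (Even (((Finset.range N).filter (fun j => σ j * σ (j+1) < 0)).card) ↔ 0 < σ 0 * σ N) := by
  induction N with
  | zero => simpa using mul_self_pos.mpr (h 0 le_rfl)
  | succ N ih =>
    have hN := ih (fun j hj => h j (by omega))
    have h0 := h 0 (by omega)
    have hNne := h N (by omega)
    have h1 := h (N+1) le_rfl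
    rw [Finset.range_add_one, Finset.filter_insert, mul_pos_iff' h0 h1]
    rw [mul_pos_iff' h0 hNne] at hN
    by_cases hf : σ N * σ (N+1) < 0
    · have hiff : ¬(0 < σ N ↔ 0 < σ (N+1)) := by
        rw [← mul_pos_iff' hNne h1]; exact asymm hf
      rw [if_pos hf, Finset.card_insert_of_notMem (by simp), Nat.even_add_one, hN]
      tauto
    · have hiff : (0 < σ N ↔ 0 < σ (N+1)) := by
        rw [← mul_pos_iff' hNne h1]
        rcases (mul_ne_zero hNne h1).lt_or_gt with h'|h'
        · exact absurd h' hf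
        · exact h'
      rw [if_neg hf, hN]
      tauto

lemma prod_neg_sign {ι : Type*} [DecidableEq ι] (A : Finset ι) (v : ι → ℝ)
    (h : ∀ i ∈ A, v i < 0) : 0 < (-1:ℝ)^A.card * ∏ i ∈ A, v i := by
  induction A using Finset.induction with
  | empty => simp
  | @insert i s hi ih =>
    rw [Finset.prod_insert hi, Finset.card_insert_of_notMem hi, pow_succ]
    have h1 := ih (fun j hj => h j (Finset.mem_insert_of_mem hj))
    have h2 := h i (Finset.mem_insert_self i s)
    nlinarith

lemma ivt_zero {f : ℝ → ℝ} (hc : Continuous f) {a b : ℝ} (hab : a ≤ b)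
    (hsign : f a * f b < 0) : ∃ c, a ≤ c ∧ c ≤ b ∧ f c = 0 := by
  rcases mul_neg_iff.1 hsign with ⟨ha, hb⟩ | ⟨ha, hb⟩
  · obtain ⟨c, hc1, hc2⟩ := intermediate_value_Icc' hab hc.continuousOn
      (Set.mem_Icc.2 ⟨hb.le, ha.le⟩)
    exact ⟨c, hc1.1, hc1.2, hc2⟩
  · obtain ⟨c, hc1, hc2⟩ := intermediate_value_Icc hab hc.continuousOn
      (Set.mem_Icc.2 ⟨ha.le, hb.le⟩)
    exact ⟨c, hc1.1, hc1.2, hc2⟩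

lemma tuple_of_finset {k : ℕ} (s : Finset ℝ) (h : s.card = k) :
    ∃ z : Fin k → ℝ, StrictMono z ∧ ∀ i, z i ∈ s :=
  ⟨fun i => (s.orderIsoOfFin h i : ℝ),
   fun i j hij => by exact_mod_cast (s.orderIsoOfFin h).strictMono hij,
   fun i => (s.orderIsoOfFin h i).2⟩

lemma anti (n m : ℕ) (hn : 1 ≤ n) (w : ℕ → ℝ) (f : ℝ → ℝ)
    (hf : f = fun t => ∑ s ∈ Finset.range n,
        2 * w s * Real.cos (((2 * n + 2 * m - 2 * s - 1 : ℕ) : ℝ) * t / 2)) :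
    ∀ t, f (2*π - t) = - f t := by
  intro t
  rw [hf]
  simp only
  rw [← Finset.sum_neg_distrib]
  apply Finset.sum_congr rfl
  intro s hs
  have hsn : s < n := Finset.mem_range.1 hs
  have hk : (2*n + 2*m - 2*s - 1 : ℕ) = 2*(n+m-s-1)+1 := by omega
  have hcast : ((2*n + 2*m - 2*s - 1 : ℕ) : ℝ) = 2*((n+m-s-1 : ℕ):ℝ)+1 := by
    rw [hk]; push_cast; ring
  rw [hcast]
  have harg : (2*((n+m-s-1 : ℕ):ℝ)+1) * (2*π - t)/2
      = (π - (2*((n+m-s-1 : ℕ):ℝ)+1) * t/2) + ((n+m-s-1 : ℕ):ℝ) * (2*π) := by ring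
  rw [harg, Real.cos_add_nat_mul_two_pi, Real.cos_pi_sub]
  ring

set_option maxHeartbeats 1000000 in
lemma core (n m : ℕ) (hn : 1 ≤ n) (w : ℕ → ℝ) (f : ℝ → ℝ)
    (hf : f = fun t => ∑ s ∈ Finset.range n,
        2 * w s * Real.cos (((2 * n + 2 * m - 2 * s - 1 : ℕ) : ℝ) * t / 2)) :
    ∃ z : Fin (2 * m + 1) → ℝ, StrictMono z ∧
        ∀ i, z i ∈ Set.Ioo (0 : ℝ) (2 * π) ∧ f (z i) = 0 := by
  classical
  have hcont : Continuous f := by rw [hf]; fun_prop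
  have hanti := anti n m hn w f hf
  by_contra hcon
  set Z : Set ℝ := {t | t ∈ Set.Ioo (0:ℝ) (2*π) ∧ f t = 0} with hZdef
  have hsmall : ∀ s : Finset ℝ, ↑s ⊆ Z → s.card ≤ 2*m := by
    intro s hs
    by_contra hbig
    push_neg at hbig
    obtain ⟨t, hts, htcard⟩ := Finset.exists_subset_card_eq (by omega : 2*m+1 ≤ s.card)
    obtain ⟨z, hzm, hz⟩ := tuple_of_finset t htcard
    exact hcon ⟨z, hzm, fun i => hs (hts (hz i))⟩
  have hfin : Z.Finite := by
    by_contra hinf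
    obtain ⟨t, hts, htcard⟩ := Set.Infinite.exists_subset_card_eq hinf (2*m+1)
    have := hsmall t hts
    omega
  set T : Finset ℝ := hfin.toFinset with hTdef
  set r : ℕ := T.card with hrdef
  have hr : r ≤ 2*m := hsmall T (by simp [hTdef])
  set e : Fin r → ℝ := fun i => (T.orderIsoOfFin rfl i : ℝ) with hedef
  have he : ∀ i, e i ∈ Z := fun i => hfin.mem_toFinset.1 (T.orderIsoOfFin rfl i).2
  have hemono : StrictMono e := fun i j hij => by
    exact_mod_cast (T.orderIsoOfFin rfl).strictMono hij
  have hesurj : ∀ x ∈ Z, ∃ i : Fin r, e i = x := by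
    intro x hx
    refine ⟨(T.orderIsoOfFin rfl).symm ⟨x, hfin.mem_toFinset.2 hx⟩, ?_⟩
    show ((T.orderIsoOfFin rfl) _ : ℝ) = x
    rw [OrderIso.apply_symm_apply]
  obtain ⟨E, hEdef⟩ : ∃ E : ℕ → ℝ, E = fun i => if h : i < r then e ⟨i, h⟩ else 2*π := ⟨_, rfl⟩
  obtain ⟨b, hbdef⟩ : ∃ b : ℕ → ℝ, b = fun j => if j = 0 then 0 else E (j-1) := ⟨_, rfl⟩
  have hb0 : b 0 = 0 := by simp [hbdef]
  have hbE : ∀ j (h1 : 1 ≤ j) (h2 : j ≤ r), b j = e ⟨j-1, by omega⟩ := by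
    intro j h1 h2
    simp only [hbdef, hEdef]
    rw [if_neg (by omega), dif_pos (by omega : j - 1 < r)]
  have hbZ : ∀ j, 1 ≤ j → j ≤ r → b j ∈ Z := by
    intro j h1 h2; rw [hbE j h1 h2]; exact he _
  have hbtop : b (r+1) = 2*π := by
    simp only [hbdef, hEdef]
    rw [if_neg (by omega), dif_neg (by omega)]
  have hbmono : ∀ i j : ℕ, i < j → j ≤ r+1 → b i < b j := by
    intro i j hij hjr
    rcases Nat.eq_zero_or_pos i with rfl | hi
    · rw [hb0]
      rcases le_or_gt j r with hjr' | hjr'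
      · exact (hbZ j (by omega) hjr').1.1
      · have : j = r+1 := by omega
        rw [this, hbtop]; positivity
    · rcases le_or_gt j r with hjr' | hjr'
      · rw [hbE i hi (by omega), hbE j (by omega) hjr']
        exact hemono (by simp [Fin.mk_lt_mk]; omega)
      · have hj : j = r+1 := by omega
        rw [hj, hbtop]
        exact (hbZ i hi (by omega)).1.2
  have hbmono' : ∀ i j : ℕ, i ≤ j → j ≤ r+1 → b i ≤ b j := by
    intro i j hij hjr
    rcases eq_or_lt_of_le hij with rfl | h
    · exact le_rfl
    · exact (hbmono i j h hjr).le
  have nozero : ∀ j, j ≤ r → ∀ x, b j < x → x < b (j+1) → f x ≠ 0 := by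
    intro j hj x h1 h2 hfx
    have hx0 : 0 < x := lt_of_le_of_lt (hb0 ▸ hbmono' 0 j (by omega) (by omega)) h1
    have hx2 : x < 2*π := lt_of_lt_of_le h2 (hbtop ▸ hbmono' (j+1) (r+1) (by omega) le_rfl)
    obtain ⟨i, hi⟩ := hesurj x ⟨⟨hx0, hx2⟩, hfx⟩
    have hbx : b ((i:ℕ)+1) = x := by
      rw [hbE ((i:ℕ)+1) (by omega) (by omega)]
      rw [← hi]
      congr 1
    rcases le_or_gt ((i:ℕ)+1) j with hc | hc
    · have := hbmono' ((i:ℕ)+1) j hc (by omega)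
      rw [hbx] at this; linarith
    · have := hbmono' (j+1) ((i:ℕ)+1) (by omega) (by omega)
      rw [hbx] at this; linarith
  have sign : ∀ j, j ≤ r → ∀ x y, b j < x → x < b (j+1) → b j < y → y < b (j+1) →
      0 < f x * f y := by
    intro j hj x y hx1 hx2 hy1 hy2
    rcases (mul_ne_zero (nozero j hj x hx1 hx2) (nozero j hj y hy1 hy2)).lt_or_gt with h | h
    · exfalso
      rcases le_total x y with hxy | hxy
      · obtain ⟨c, hc1, hc2, hc3⟩ := ivt_zero hcont hxy h
        exact nozero j hj c (lt_of_lt_of_le hx1 hc1) (lt_of_le_of_lt hc2 hy2) hc3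
      · obtain ⟨c, hc1, hc2, hc3⟩ := ivt_zero hcont hxy (by linarith [mul_comm (f x) (f y)] : f y * f x < 0)
        exact nozero j hj c (lt_of_lt_of_le hy1 hc1) (lt_of_le_of_lt hc2 hx2) hc3
    · exact h
  set u : ℕ → ℝ := fun j => (b j + b (j+1))/2 with hudef
  have hu : ∀ j, j ≤ r → b j < u j ∧ u j < b (j+1) := by
    intro j hj
    have := hbmono j (j+1) (by omega) (by omega)
    constructor <;> · simp only [hudef]; linarith
  set σ : ℕ → ℝ := fun j => f (u j) with hσdef
  have σnz : ∀ j, j ≤ r → σ j ≠ 0 := fun j hj =>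
    nozero j hj (u j) (hu j hj).1 (hu j hj).2
  have hbZ2 : ∀ j, 1 ≤ j → j ≤ r → (0 < b j ∧ b j < 2*π) ∧ f (b j) = 0 :=
    fun j h1 h2 => hbZ j h1 h2
  have hb1pos : 0 < b 1 := by have := hbmono 0 1 (by omega) (by omega); rwa [hb0] at this
  have hbrlt : b r < 2*π := by have := hbmono r (r+1) (by omega) le_rfl; rwa [hbtop] at this
  have hb1le : b 1 ≤ 2*π := by have := hbmono' 1 (r+1) (by omega) le_rfl; rwa [hbtop] at this
  have ends : σ 0 * σ r < 0 := by
    set v : ℝ := max (b r) (2*π - b 1) with hvdef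
    have hv : v < 2*π := by apply max_lt hbrlt; linarith
    set x : ℝ := (v + 2*π)/2 with hxdef
    have hvx : v < x := by simp only [hxdef]; linarith
    have hx2 : x < 2*π := by simp only [hxdef]; linarith
    have hx1 : b r < x := lt_of_le_of_lt (le_max_left _ _) hvx
    have hy1 : 0 < 2*π - x := by linarith
    have hy2 : 2*π - x < b 1 := by
      have h := le_max_right (b r) (2*π - b 1)
      have : 2*π - b 1 < x := lt_of_le_of_lt h hvx
      linarith
    have hA : 0 < f x * σ r := sign r le_rfl x (u r) hx1 (by rw [hbtop]; exact hx2)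
      (hu r le_rfl).1 (hu r le_rfl).2
    have hB : 0 < f (2*π - x) * σ 0 := sign 0 (by omega) (2*π - x) (u 0)
      (by rw [hb0]; linarith) hy2 (hu 0 (by omega)).1 (hu 0 (by omega)).2
    have hxy : f x = - f (2*π - x) := by
      have h := hanti (2*π - x)
      rw [show 2*π - (2*π - x) = x by ring] at h
      exact h
    rw [hxy] at hA
    nlinarith [mul_pos hA hB, sq_nonneg (f (2*π - x))]
  set S : Finset ℕ := (Finset.range r).filter (fun j => σ j * σ (j+1) < 0) with hSdef
  have hSodd : Odd S.card := by
    rw [← Nat.not_even_iff_odd]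
    intro hev
    exact absurd ((flip_parity r σ σnz).1 hev) (asymm ends)
  have hScard : S.card ≤ r := le_trans (Finset.card_filter_le _ _) (by simp)
  set g : ℝ → ℝ := fun t => ∏ j ∈ S, Real.sin ((t - b (j+1))/2) with hgdef
  have hgcont : Continuous g := by rw [hgdef]; fun_prop
  have horth : (∫ t in (0:ℝ)..(2*π), f t * g t) = 0 := by
    have hstep : ∀ t : ℝ, f t * g t = ∑ s ∈ Finset.range n,
        (2 * w s) * (Real.cos (((2*n+2*m-2*s-1 : ℕ):ℝ) * t / 2) *
          ∏ j ∈ S, Real.sin ((t - b (j+1))/2)) := by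
      intro t
      rw [hf]
      simp only
      rw [Finset.sum_mul]
      exact Finset.sum_congr rfl (fun s _ => by rw [hgdef]; ring)
    rw [intervalIntegral.integral_congr (fun t _ => hstep t),
      intervalIntegral.integral_finset_sum]
    · apply Finset.sum_eq_zero
      intro s hs
      have hsn : s < n := Finset.mem_range.1 hs
      rw [intervalIntegral.integral_const_mul]
      have hdodd : Odd (2*n+2*m-2*s-1) := ⟨n+m-s-1, by omega⟩
      have hdge : S.card < 2*n+2*m-2*s-1 := by omega
      rw [orthR S (fun j => b (j+1)) (2*n+2*m-2*s-1) hdodd hSodd hdge]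
      ring
    · intro s hs
      apply Continuous.intervalIntegrable
      fun_prop
  have gsign : ∀ j, j ≤ r → ∀ x, b j < x → x < b (j+1) →
      0 < g x * (-1:ℝ)^((S.filter (fun i => j ≤ i)).card) := by
    intro j hj x h1 h2
    have hx0 : 0 < x := lt_of_le_of_lt (hb0 ▸ hbmono' 0 j (by omega) (by omega)) h1
    have hx2 : x < 2*π := lt_of_lt_of_le h2 (hbtop ▸ hbmono' (j+1) (r+1) (by omega) le_rfl)
    have hsplit : g x = (∏ i ∈ S.filter (fun i => j ≤ i), Real.sin ((x - b (i+1))/2)) *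
        ∏ i ∈ S.filter (fun i => ¬ j ≤ i), Real.sin ((x - b (i+1))/2) := by
      rw [hgdef]; exact (Finset.prod_filter_mul_prod_filter_not S _ _).symm
    have hneg : ∀ i ∈ S.filter (fun i => j ≤ i), Real.sin ((x - b (i+1))/2) < 0 := by
      intro i hi
      obtain ⟨hiS', hji⟩ := Finset.mem_filter.1 hi
      have hir : i < r := Finset.mem_range.1 (Finset.mem_filter.1 hiS').1
      have hbi : x < b (i+1) := lt_of_lt_of_le h2 (hbmono' (j+1) (i+1) (by omega) (by omega))
      have hbi2 : b (i+1) < 2*π := (hbZ2 (i+1) (by omega) (by omega)).1.2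
      apply Real.sin_neg_of_neg_of_neg_pi_lt
      · linarith
      · linarith
    have hposf : ∀ i ∈ S.filter (fun i => ¬ j ≤ i), 0 < Real.sin ((x - b (i+1))/2) := by
      intro i hi
      obtain ⟨hiS', hji⟩ := Finset.mem_filter.1 hi
      push_neg at hji
      have hir : i < r := Finset.mem_range.1 (Finset.mem_filter.1 hiS').1
      have hbi : b (i+1) < x := lt_of_le_of_lt (hbmono' (i+1) j (by omega) (by omega)) h1
      have hbi0 : 0 < b (i+1) := (hbZ2 (i+1) (by omega) (by omega)).1.1
      apply Real.sin_pos_of_pos_of_lt_pi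
      · linarith
      · linarith
    have hP := prod_neg_sign _ _ hneg
    have hQ := Finset.prod_pos hposf
    rw [hsplit]
    nlinarith [mul_pos hP hQ]
  have crel : ∀ j, j < r → (S.filter (fun i => j ≤ i)).card
      = (S.filter (fun i => j+1 ≤ i)).card + (if j ∈ S then 1 else 0) := by
    intro j hjr
    have hset : S.filter (fun i => j ≤ i)
        = if j ∈ S then insert j (S.filter (fun i => j+1 ≤ i))
          else S.filter (fun i => j+1 ≤ i) := by
      split_ifs with hjS
      · ext i
        simp only [Finset.mem_filter, Finset.mem_insert]
        constructor
        · rintro ⟨hiS, hij⟩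
          rcases eq_or_ne i j with rfl | hne
          · exact Or.inl rfl
          · exact Or.inr ⟨hiS, by omega⟩
        · rintro (rfl | ⟨hiS, hij⟩)
          · exact ⟨hjS, le_rfl⟩
          · exact ⟨hiS, by omega⟩
      · ext i
        simp only [Finset.mem_filter]
        constructor
        · rintro ⟨hiS, hij⟩
          refine ⟨hiS, ?_⟩
          rcases eq_or_ne i j with rfl | hne
          · exact absurd hiS hjS
          · omega
        · rintro ⟨hiS, hij⟩
          exact ⟨hiS, by omega⟩
    rw [hset]
    split_ifs with hjS
    · rw [Finset.card_insert_of_notMem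
        (by intro hmem; exact absurd (Finset.mem_filter.1 hmem).2 (by omega))]
    · simp
  have matchsign : ∀ j, j ≤ r →
      0 < (σ j * (-1:ℝ)^((S.filter (fun i => j ≤ i)).card)) *
          (σ 0 * (-1:ℝ)^((S.filter (fun i => 0 ≤ i)).card)) := by
    intro j
    induction j with
    | zero =>
      intro _
      exact mul_self_pos.mpr (mul_ne_zero (σnz 0 (by omega)) (pow_ne_zero _ (by norm_num)))
    | succ j ih =>
      intro hj
      have hjr : j < r := by omega
      have ihj := ih (by omega)
      have hcr := crel j hjr
      by_cases hjS : j ∈ S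
      · have hflip : σ j * σ (j+1) < 0 := (Finset.mem_filter.1 hjS).2
        have hy : (-1:ℝ)^((S.filter (fun i => j ≤ i)).card)
            = -(-1:ℝ)^((S.filter (fun i => j+1 ≤ i)).card) := by
          rw [hcr, if_pos hjS, pow_succ]; ring
        rw [hy] at ihj
        nlinarith [mul_pos ihj (show 0 < -(σ j * σ (j+1)) by linarith), sq_nonneg (σ j)]
      · have hne := mul_ne_zero (σnz j (by omega)) (σnz (j+1) hj)
        have hflip : 0 < σ j * σ (j+1) := by
          rcases hne.lt_or_gt with h | h
          · exact absurd (Finset.mem_filter.2 ⟨Finset.mem_range.2 hjr, h⟩) hjS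
          · exact h
        have hy : (-1:ℝ)^((S.filter (fun i => j ≤ i)).card)
            = (-1:ℝ)^((S.filter (fun i => j+1 ≤ i)).card) := by
          rw [hcr, if_neg hjS, add_zero]
        rw [hy] at ihj
        nlinarith [mul_pos ihj hflip, sq_nonneg (σ j)]
  obtain ⟨ε, hεdef⟩ : ∃ x : ℝ, x = σ 0 * (-1:ℝ)^((S.filter (fun i => 0 ≤ i)).card) := ⟨_, rfl⟩
  have hpos : ∀ j, j ≤ r → ∀ x, b j < x → x < b (j+1) → 0 < ε * (f x * g x) := by
    intro j hj x h1 h2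
    have hA : 0 < f x * σ j := sign j hj x (u j) h1 h2 (hu j hj).1 (hu j hj).2
    have hB := gsign j hj x h1 h2
    have hC := matchsign j hj
    rw [hεdef]
    nlinarith [mul_pos (mul_pos hA hB) hC,
      sq_nonneg (σ j * (-1:ℝ)^((S.filter (fun i => j ≤ i)).card))]
  have hnn : ∀ x ∈ Set.Ioo (0:ℝ) (2*π), 0 ≤ ε * (f x * g x) := by
    intro x hx
    rcases eq_or_ne (f x) 0 with hfx | hfx
    · rw [hfx]; simp
    · set js : Finset ℕ := (Finset.range (r+1)).filter (fun j => b j < x) with hjsdef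
      have hne : js.Nonempty := ⟨0, Finset.mem_filter.2
        ⟨Finset.mem_range.2 (by omega), by rw [hb0]; exact hx.1⟩⟩
      set j : ℕ := js.max' hne with hjdef
      have hjmem := js.max'_mem hne
      obtain ⟨hjr', hbj⟩ := Finset.mem_filter.1 hjmem
      have hjr : j ≤ r := by have := Finset.mem_range.1 hjr'; omega
      have hxlt : x < b (j+1) := by
        by_contra hge
        push_neg at hge
        rcases le_or_gt (j+1) r with hc | hc
        · rcases eq_or_lt_of_le hge with heq | hlt
          · have hz0 := (hbZ2 (j+1) (by omega) hc).2
            rw [heq] at hz0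
            exact hfx hz0
          · have hmem : j+1 ∈ js := Finset.mem_filter.2
              ⟨Finset.mem_range.2 (by omega), hlt⟩
            have := Finset.le_max' js (j+1) hmem
            omega
        · have hj1 : j = r := by omega
          have hb2 : b (j+1) = 2*π := by rw [hj1, hbtop]
          rw [hb2] at hge
          exact absurd hx.2 (not_lt.2 hge)
      exact (hpos j hjr x hbj hxlt).le
  have hFcont : Continuous (fun x => ε * (f x * g x)) :=
    continuous_const.mul (hcont.mul hgcont)
  have hFnn : ∀ x ∈ Set.Icc (0:ℝ) (2*π), 0 ≤ ε * (f x * g x) := by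
    have h2π : (0:ℝ) < 2*π := by positivity
    have hclos : closure (Set.Ioo (0:ℝ) (2*π)) = Set.Icc 0 (2*π) := closure_Ioo h2π.ne
    intro x hx
    rw [← hclos] at hx
    exact le_on_closure (f := fun _ : ℝ => (0:ℝ)) (g := fun x => ε * (f x * g x)) hnn
      continuous_const.continuousOn hFcont.continuousOn hx
  have hu0a : 0 < u 0 := by have := (hu 0 (by omega)).1; rwa [hb0] at this
  have hu0b : u 0 < b 1 := (hu 0 (by omega)).2
  have I2 : 0 < ∫ t in (u 0/2)..(u 0), ε * (f t * g t) :=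
    intervalIntegral_pos_of_pos_on (hFcont.intervalIntegrable _ _)
      (fun x hx => hpos 0 (by omega) x (by rw [hb0]; linarith [hx.1]) (by
        have := hx.2; simp only [Set.mem_Ioo] at hx; linarith [hx.2])) (by linarith)
  have I1 : 0 ≤ ∫ t in (0:ℝ)..(u 0/2), ε * (f t * g t) :=
    intervalIntegral.integral_nonneg (by linarith)
      (fun x hx => hFnn x ⟨hx.1, by linarith [hx.2]⟩)
  have I3 : 0 ≤ ∫ t in (u 0)..(2*π), ε * (f t * g t) :=
    intervalIntegral.integral_nonneg (by linarith)
      (fun x hx => hFnn x ⟨by linarith [hx.1], hx.2⟩)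
  have hadd1 := intervalIntegral.integral_add_adjacent_intervals
    (μ := MeasureTheory.volume)
    (a := (0:ℝ)) (b := u 0/2) (c := u 0) (f := fun t => ε * (f t * g t))
    (hFcont.intervalIntegrable _ _) (hFcont.intervalIntegrable _ _)
  have hadd2 := intervalIntegral.integral_add_adjacent_intervals
    (μ := MeasureTheory.volume)
    (a := (0:ℝ)) (b := u 0) (c := 2*π) (f := fun t => ε * (f t * g t))
    (hFcont.intervalIntegrable _ _) (hFcont.intervalIntegrable _ _)
  have hzero : (∫ t in (0:ℝ)..(2*π), ε * (f t * g t)) = 0 := by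
    rw [intervalIntegral.integral_const_mul, horth, mul_zero]
  linarith



end Helpers17

/-- The function `f(t) = ∑_{s=0}^{n−1} 2 w_s cos((2n+2m−2s−1)t/2)` with
`w_{n−1} ≠ 0` has at least `2m+1` distinct zeros in `(0,2π)`, and, if `f(π)=0`,
at least `m` distinct zeros in `(0,π)`. -/
theorem stmt17 (n m : ℕ) (hn : 1 < n) (hm : 1 ≤ m) (w : ℕ → ℝ)
    (hw : w (n - 1) ≠ 0) (f : ℝ → ℝ)
    (hf : f = fun t => ∑ s ∈ Finset.range n,
        2 * w s * Real.cos (((2 * n + 2 * m - 2 * s - 1 : ℕ) : ℝ) * t / 2)) :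
    (∃ z : Fin (2 * m + 1) → ℝ, StrictMono z ∧
        ∀ i, z i ∈ Set.Ioo (0 : ℝ) (2 * π) ∧ f (z i) = 0) ∧
    (f π = 0 → ∃ z : Fin m → ℝ, StrictMono z ∧
        ∀ i, z i ∈ Set.Ioo (0 : ℝ) π ∧ f (z i) = 0) := by
  classical
  have hn' : 1 ≤ n := le_of_lt hn
  have hanti := anti n m hn' w f hf
  obtain ⟨z, hzm, hz⟩ := core n m hn' w f hf
  refine ⟨⟨z, hzm, hz⟩, ?_⟩
  intro _
  have hfiber : ∀ a ∈ Finset.image (fun i : Fin (2*m+1) => min (z i) (2*π - z i)) Finset.univ,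
      ((Finset.univ : Finset (Fin (2*m+1))).filter
      (fun i => min (z i) (2*π - z i) = a)).card ≤ 2 := by
    intro a _
    have hmaps : ∀ i ∈ Finset.univ.filter (fun i : Fin (2*m+1) => min (z i) (2*π - z i) = a),
        z i ∈ ({a, 2*π - a} : Finset ℝ) := by
      intro i hi
      have hia := (Finset.mem_filter.1 hi).2
      rcases min_cases (z i) (2*π - z i) with ⟨h1, _⟩ | ⟨h1, _⟩
      · rw [h1] at hia; simp [hia]
      · rw [h1] at hia
        simp only [Finset.mem_insert, Finset.mem_singleton]
        right; linarith
    have hinj : Set.InjOn z ((Finset.univ.filter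
        (fun i : Fin (2*m+1) => min (z i) (2*π - z i) = a)) : Set (Fin (2*m+1))) :=
      hzm.injective.injOn
    calc ((Finset.univ : Finset (Fin (2*m+1))).filter
        (fun i => min (z i) (2*π - z i) = a)).card
        ≤ ({a, 2*π - a} : Finset ℝ).card := Finset.card_le_card_of_injOn z hmaps hinj
      _ ≤ 2 := (Finset.card_insert_le _ _).trans (by simp)
  have hcard0 : 2*m+1 ≤ 2 * (Finset.image (fun i : Fin (2*m+1) => min (z i) (2*π - z i))
      Finset.univ).card := by
    have h := Finset.card_le_mul_card_image
      (f := fun i : Fin (2*m+1) => min (z i) (2*π - z i)) Finset.univ 2 hfiber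
    simpa using h
  have hAcard : m ≤ ((Finset.image (fun i : Fin (2*m+1) => min (z i) (2*π - z i))
      Finset.univ).erase π).card := by
    have h1 := Finset.pred_card_le_card_erase
      (s := Finset.image (fun i : Fin (2*m+1) => min (z i) (2*π - z i)) Finset.univ) (a := π)
    omega
  obtain ⟨B, hBA, hBcard⟩ := Finset.exists_subset_card_eq hAcard
  obtain ⟨zz, hzzm, hzz⟩ := tuple_of_finset B hBcard
  refine ⟨zz, hzzm, fun i => ?_⟩
  have hiA := hBA (hzz i)
  have hiA0 := Finset.mem_of_mem_erase hiA
  have hne : zz i ≠ π := Finset.ne_of_mem_erase hiA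
  obtain ⟨k, _, hk⟩ := Finset.mem_image.1 hiA0
  have hkpos : 0 < z k := (hz k).1.1
  have hklt : z k < 2*π := (hz k).1.2
  have hmin0 : 0 < zz i := by rw [← hk]; exact lt_min hkpos (by linarith)
  have hminle : zz i ≤ π := by
    rw [← hk]
    rcases le_total (z k) π with h | h
    · exact (min_le_left _ _).trans h
    · exact (min_le_right _ _).trans (by linarith)
  have hfz : f (zz i) = 0 := by
    rw [← hk]
    rcases min_cases (z k) (2*π - z k) with ⟨h1, _⟩ | ⟨h1, _⟩
    · rw [h1]; exact (hz k).2
    · rw [h1, hanti, (hz k).2]; ring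
  exact ⟨⟨hmin0, lt_of_le_of_ne hminle hne⟩, hfz⟩
end
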